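/- For every s with 1/2 < s < 1 there exists a constant C > 0 such that for every smooth compactly supported function f : ℝ³ → ℝ, ( ∫_{ℝ²} ( sup_{x₃ > 0} |f(x_h, x₃)| )^{2/s} dx_h )^{s/2} ≤ C · ‖∂₃f‖_{L²}^{1/2} · ( ∫_{ℝ²} ( ∫₀^∞ f(x_h, x₃)² dx₃ )^{1/(2s−1)} dx_h )^{(2s−1)/4}. -/

import Mathlib

open MeasureTheory

/-- Partial derivative in the `i`-th coordinate direction. -/
noncomputable def pd (i : Fin 3) (f : (Fin 3 → ℝ) → ℝ) : (Fin 3 → ℝ) → ℝ :=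
  fun x => fderiv ℝ f x (Pi.single i 1)

/-- L² norm over the upper half-space `{x : x₃ > 0}` of ℝ³. -/
noncomputable def L2H (f : (Fin 3 → ℝ) → ℝ) : ℝ :=
  (eLpNorm f 2 (volume.restrict {x : Fin 3 → ℝ | 0 < x 2})).toReal

open MeasureTheory Set Filter Topology
open scoped ENNReal NNReal

noncomputable def vdir : Fin 3 → ℝ := Pi.single 2 1

lemma pd_two (f : (Fin 3 → ℝ) → ℝ) (x : Fin 3 → ℝ) : pd 2 f x = fderiv ℝ f x vdir := rfl

lemma one_le_inf : (1 : WithTop ℕ∞) ≤ ((⊤:ℕ∞) : WithTop ℕ∞) := by exact_mod_cast le_top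

lemma snoc_two (xh : Fin 2 → ℝ) (t : ℝ) : (Fin.snoc xh t : Fin 3 → ℝ) 2 = t := by
  show (Fin.snoc xh t : Fin 3 → ℝ) (Fin.last 2) = t
  exact Fin.snoc_last _ _

lemma abs_le_norm_snoc (xh : Fin 2 → ℝ) (t : ℝ) : |t| ≤ ‖(Fin.snoc xh t : Fin 3 → ℝ)‖ := by
  have h := norm_le_pi_norm (Fin.snoc xh t : Fin 3 → ℝ) 2
  rwa [snoc_two, Real.norm_eq_abs] at h

lemma normh_le_norm_snoc (xh : Fin 2 → ℝ) (t : ℝ) : ‖xh‖ ≤ ‖(Fin.snoc xh t : Fin 3 → ℝ)‖ := by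
  refine (pi_norm_le_iff_of_nonneg (norm_nonneg _)).2 fun i => ?_
  have : xh i = (Fin.snoc xh t : Fin 3 → ℝ) (Fin.castSucc i) := by simp
  rw [this]
  exact norm_le_pi_norm (Fin.snoc xh t : Fin 3 → ℝ) _

lemma snoc_line (xh : Fin 2 → ℝ) (t : ℝ) :
    (Fin.snoc xh t : Fin 3 → ℝ) = (Fin.snoc xh 0 : Fin 3 → ℝ) + t • vdir := by
  funext j
  refine Fin.lastCases ?_ (fun i => ?_) j
  · have h2 : (2 : Fin 3) = Fin.last 2 := rfl
    simp [vdir, h2]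
    rw [snoc_two, snoc_two]; simp
  · have hne : Fin.castSucc i ≠ (2 : Fin 3) := (Fin.castSucc_lt_last i).ne
    simp [vdir, Pi.single_eq_of_ne hne]

lemma hasDerivAt_slice {f : (Fin 3 → ℝ) → ℝ} (hf : ContDiff ℝ (⊤ : ℕ∞) f)
    (xh : Fin 2 → ℝ) (t : ℝ) :
    HasDerivAt (fun u => f (Fin.snoc xh u)) (pd 2 f (Fin.snoc xh t)) t := by
  have hline : HasDerivAt
      (fun u : ℝ => (Fin.snoc xh 0 : Fin 3 → ℝ) + u • vdir) vdir t := by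
    simpa using ((hasDerivAt_id t).smul_const vdir).const_add (Fin.snoc xh 0 : Fin 3 → ℝ)
  have hdf := (hf.differentiable (by simp) (Fin.snoc xh t)).hasFDerivAt
  rw [snoc_line xh t] at hdf
  have h := hdf.comp_hasDerivAt t hline
  have he : (f ∘ fun u : ℝ => ((Fin.snoc xh 0 : Fin 3 → ℝ) + u • vdir))
      = fun u => f (Fin.snoc xh u) := by
    funext u; simp only [Function.comp]; rw [← snoc_line]
  rw [he] at h
  rw [pd_two, snoc_line xh t]
  exact h

lemma contDiff_slice {f : (Fin 3 → ℝ) → ℝ} (hf : ContDiff ℝ (⊤ : ℕ∞) f) (xh : Fin 2 → ℝ) :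
    ContDiff ℝ 1 (fun u : ℝ => f (Fin.snoc xh u)) := by
  have h1 : ContDiff ℝ 1 (fun u : ℝ => (Fin.snoc xh 0 : Fin 3 → ℝ) + u • vdir) :=
    contDiff_const.add (contDiff_id.smul contDiff_const)
  have h := (hf.of_le one_le_inf).comp h1
  have he : (f ∘ fun u : ℝ => ((Fin.snoc xh 0 : Fin 3 → ℝ) + u • vdir))
      = fun u : ℝ => f (Fin.snoc xh u) := by
    funext u; simp only [Function.comp]; rw [← snoc_line]
  rwa [he] at h

lemma exists_R {f : (Fin 3 → ℝ) → ℝ} (hs : HasCompactSupport f) :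
    ∃ R > (0:ℝ), ∀ x : Fin 3 → ℝ, R < ‖x‖ → f x = 0 := by
  obtain ⟨r, hr⟩ := hs.isBounded.subset_closedBall 0
  refine ⟨max r 1, lt_of_lt_of_le one_pos (le_max_right _ _), fun x hx => ?_⟩
  apply image_eq_zero_of_notMem_tsupport
  intro hmem
  have := mem_closedBall_zero_iff.1 (hr hmem)
  exact absurd (this.trans (le_max_left r 1)) (not_le.2 hx)

lemma snoc_cont : Continuous (fun p : ℝ × (Fin 2 → ℝ) => (Fin.snoc p.2 p.1 : Fin 3 → ℝ)) := by
  refine continuous_pi fun j => ?_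
  refine Fin.lastCases ?_ (fun i => ?_) j
  · simp only [Fin.snoc_last]; exact continuous_fst
  · simp only [Fin.snoc_castSucc]; exact (continuous_apply i).comp continuous_snd

lemma fubini_half (F : (Fin 3 → ℝ) → ℝ) (hc : Continuous F) (hs : HasCompactSupport F) :
    ∫ x in {x : Fin 3 → ℝ | 0 < x 2}, F x
      = ∫ xh : Fin 2 → ℝ, ∫ t in Set.Ioi (0:ℝ), F (Fin.snoc xh t) := by
  obtain ⟨R, hR, hvan⟩ := exists_R hs
  set e := MeasurableEquiv.piFinSuccAbove (fun _ : Fin 3 => ℝ) 2 with he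
  have hmp : MeasurePreserving e.symm volume volume :=
    (volume_preserving_piFinSuccAbove (fun _ : Fin 3 => ℝ) 2).symm e
  have hsymm : ∀ p : ℝ × (Fin 2 → ℝ), e.symm p = (Fin.snoc p.2 p.1 : Fin 3 → ℝ) := by
    intro p
    show (Fin.insertNthEquiv (fun _ : Fin 3 => ℝ) 2) p = _
    have h2 : (2 : Fin 3) = Fin.last 2 := rfl
    simp [Fin.insertNthEquiv, h2, Fin.insertNth_last']
    rw [h2, Fin.insertNth_last']
  -- the function on the product space
  set G : ℝ × (Fin 2 → ℝ) → ℝ := fun p => F (Fin.snoc p.2 p.1) with hG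
  have hGcont : Continuous G := hc.comp snoc_cont
  have hGsupp : HasCompactSupport G := by
    refine HasCompactSupport.intro (isCompact_closedBall 0 R) fun p hp => ?_
    apply hvan
    rcases lt_max_iff.1 (lt_of_not_ge fun hle => hp (mem_closedBall_zero_iff.2 hle)) with h | h
    · exact lt_of_lt_of_le h ((Real.norm_eq_abs _ ▸ abs_le_norm_snoc p.2 p.1))
    · exact lt_of_lt_of_le h (normh_le_norm_snoc p.2 p.1)
  have hGint : Integrable G (volume.prod volume) := by
    have := hGcont.integrable_of_hasCompactSupport (μ := volume) hGsupp
    rwa [MeasureTheory.Measure.volume_eq_prod] at this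
  have hpre : e.symm ⁻¹' {x : Fin 3 → ℝ | 0 < x 2} = (Set.Ioi (0:ℝ)) ×ˢ Set.univ := by
    ext p
    simp only [Set.mem_preimage, Set.mem_setOf_eq, hsymm p, snoc_two, Set.mem_prod,
      Set.mem_univ, and_true, Set.mem_Ioi]
  have step1 : ∫ x in {x : Fin 3 → ℝ | 0 < x 2}, F x
      = ∫ p in (Set.Ioi (0:ℝ)) ×ˢ (Set.univ : Set (Fin 2 → ℝ)), G p ∂(volume.prod volume) := by
    rw [← hmp.setIntegral_preimage_emb e.symm.measurableEmbedding F _, hpre]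
    rw [← MeasureTheory.Measure.volume_eq_prod]
    exact setIntegral_congr_fun ((measurableSet_Ioi).prod MeasurableSet.univ)
      (fun p _ => by rw [hsymm p])
  have hres : (volume.prod volume).restrict ((Set.Ioi (0:ℝ)) ×ˢ (Set.univ : Set (Fin 2 → ℝ)))
      = (volume.restrict (Set.Ioi (0:ℝ))).prod volume := by
    rw [← Measure.prod_restrict, Measure.restrict_univ]
  have hint2 : Integrable G ((volume.restrict (Set.Ioi (0:ℝ))).prod volume) := by
    have := hGint.integrableOn (s := (Set.Ioi (0:ℝ)) ×ˢ (Set.univ : Set (Fin 2 → ℝ)))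
    rwa [IntegrableOn, hres] at this
  rw [step1]
  show ∫ p, G p ∂((volume.prod volume).restrict _) = _
  rw [hres, integral_prod_symm G hint2]

lemma slice_hcs {F : (Fin 3 → ℝ) → ℝ} {R : ℝ}
    (hvan : ∀ x : Fin 3 → ℝ, R < ‖x‖ → F x = 0) (xh : Fin 2 → ℝ) :
    HasCompactSupport (fun t : ℝ => F (Fin.snoc xh t)) := by
  refine HasCompactSupport.intro (isCompact_Icc (a := -R) (b := R)) fun t ht => ?_
  apply hvan
  have : R < |t| := by
    rcases not_and_or.1 (fun h => ht ⟨h.1, h.2⟩ : ¬(-R ≤ t ∧ t ≤ R)) with h | h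
    · exact lt_of_lt_of_le (by linarith [not_le.1 h]) (neg_le_abs t)
    · exact lt_of_lt_of_le (not_le.1 h) (le_abs_self t)
  exact lt_of_lt_of_le this (abs_le_norm_snoc xh t)

lemma slice_int_nonneg (F : (Fin 3 → ℝ) → ℝ) (xh : Fin 2 → ℝ) :
    0 ≤ ∫ t in Set.Ioi (0:ℝ), F (Fin.snoc xh t) ^ 2 :=
  integral_nonneg fun t => sq_nonneg _

lemma slice_int_le {F : (Fin 3 → ℝ) → ℝ} {R C : ℝ} (hR : 0 < R)
    (hvan : ∀ x : Fin 3 → ℝ, R < ‖x‖ → F x = 0) (hbd : ∀ x, |F x| ≤ C) (xh : Fin 2 → ℝ) :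
    ∫ t in Set.Ioi (0:ℝ), F (Fin.snoc xh t) ^ 2 ≤ 2 * R * C ^ 2 := by
  have hC : 0 ≤ C := (abs_nonneg _).trans (hbd 0)
  set ind : ℝ → ℝ := Set.indicator (Set.Icc (-R) R) (fun _ => C ^ 2) with hind
  have hfin : (volume.restrict (Set.Ioi (0:ℝ))) (Set.Icc (-R) R) < ⊤ := by
    refine lt_of_le_of_lt (Measure.restrict_apply_le _ _) ?_
    rw [Real.volume_Icc]
    exact ENNReal.ofReal_lt_top
  have hii : Integrable ind (volume.restrict (Set.Ioi (0:ℝ))) := by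
    rw [hind, integrable_indicator_iff measurableSet_Icc]
    exact integrableOn_const hfin.ne
  have hmono : ∀ t : ℝ, F (Fin.snoc xh t) ^ 2 ≤ ind t := by
    intro t
    by_cases ht : t ∈ Set.Icc (-R) R
    · rw [hind, Set.indicator_of_mem ht]
      calc F (Fin.snoc xh t) ^ 2 = |F (Fin.snoc xh t)| ^ 2 := (sq_abs _).symm
        _ ≤ C ^ 2 := pow_le_pow_left₀ (abs_nonneg _) (hbd _) 2
    · rw [hind, Set.indicator_of_notMem ht]
      have : R < |t| := by
        rcases not_and_or.1 (fun h => ht ⟨h.1, h.2⟩ : ¬(-R ≤ t ∧ t ≤ R)) with h | h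
        · exact lt_of_lt_of_le (by linarith [not_le.1 h]) (neg_le_abs t)
        · exact lt_of_lt_of_le (not_le.1 h) (le_abs_self t)
      rw [hvan _ (lt_of_lt_of_le this (abs_le_norm_snoc xh t))]
      norm_num
  calc ∫ t in Set.Ioi (0:ℝ), F (Fin.snoc xh t) ^ 2
      ≤ ∫ t in Set.Ioi (0:ℝ), ind t :=
        integral_mono_of_nonneg (Filter.Eventually.of_forall fun t => sq_nonneg _) hii
          (Filter.Eventually.of_forall hmono)
    _ = ((volume.restrict (Set.Ioi (0:ℝ))) (Set.Icc (-R) R)).toReal • (C^2) := by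
        rw [hind, integral_indicator measurableSet_Icc, setIntegral_const]
        rfl
    _ ≤ 2 * R * C ^ 2 := by
        rw [smul_eq_mul]
        refine mul_le_mul_of_nonneg_right ?_ (sq_nonneg C)
        refine ENNReal.toReal_le_of_le_ofReal (by linarith) ?_
        refine le_trans (Measure.restrict_apply_le _ _) ?_
        rw [Real.volume_Icc]
        exact ENNReal.ofReal_le_ofReal (by linarith)

lemma slice_int_zero {F : (Fin 3 → ℝ) → ℝ} {R : ℝ}
    (hvan : ∀ x : Fin 3 → ℝ, R < ‖x‖ → F x = 0) (xh : Fin 2 → ℝ) (hxh : R < ‖xh‖) :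
    ∫ t in Set.Ioi (0:ℝ), F (Fin.snoc xh t) ^ 2 = 0 := by
  have : ∀ t : ℝ, F (Fin.snoc xh t) = 0 := fun t =>
    hvan _ (lt_of_lt_of_le hxh (normh_le_norm_snoc xh t))
  simp [this]

lemma snoc_cont1 (xh : Fin 2 → ℝ) : Continuous (fun t : ℝ => (Fin.snoc xh t : Fin 3 → ℝ)) :=
  snoc_cont.comp (continuous_id.prodMk continuous_const)

lemma pointwise_sq_le {f : (Fin 3 → ℝ) → ℝ} (hf : ContDiff ℝ (⊤ : ℕ∞) f)
    {R : ℝ} (hvf : ∀ x : Fin 3 → ℝ, R < ‖x‖ → f x = 0)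
    (hvP : ∀ x : Fin 3 → ℝ, R < ‖x‖ → pd 2 f x = 0)
    (hPc : Continuous (pd 2 f)) (xh : Fin 2 → ℝ) {b : ℝ} (hb : 0 < b) :
    f (Fin.snoc xh b) ^ 2 ≤ 2 * ((∫ t in Set.Ioi (0:ℝ), f (Fin.snoc xh t)^2) ^ ((1:ℝ)/2)
      * (∫ t in Set.Ioi (0:ℝ), pd 2 f (Fin.snoc xh t)^2) ^ ((1:ℝ)/2)) := by
  set φ : ℝ → ℝ := fun t => f (Fin.snoc xh t) with hφ
  set φ' : ℝ → ℝ := fun t => pd 2 f (Fin.snoc xh t) with hφ'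
  have φcont : Continuous φ := (contDiff_slice hf xh).continuous
  have φ'cont : Continuous φ' := hPc.comp (snoc_cont1 xh)
  have φhcs : HasCompactSupport φ := slice_hcs hvf xh
  have φ'hcs : HasCompactSupport φ' := slice_hcs hvP xh
  have hder : ∀ t, HasDerivAt φ (φ' t) t := fun t => hasDerivAt_slice hf xh t
  have hψc : ContDiff ℝ 1 (fun t => φ t ^ 2) := (contDiff_slice hf xh).pow 2
  have hψs : HasCompactSupport (fun t => φ t ^ 2) := by
    have h : (fun t => φ t ^ 2) = φ * φ := by funext t; simp [sq]
    rw [h]; exact φhcs.mul_left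
  have hψd : ∀ t, deriv (fun u => φ u ^ 2) t = 2 * φ t * φ' t := by
    intro t
    have h := ((hder t).pow 2).deriv
    simp at h; exact h
  have ftc := HasCompactSupport.integral_Ioi_deriv_eq hψc hψs b
  have h1 : ∫ t in Set.Ioi b, 2 * φ t * φ' t = -(φ b ^ 2) := by
    rw [← ftc]
    exact setIntegral_congr_fun measurableSet_Ioi fun t _ => (hψd t).symm
  -- integrability of |2 φ φ'| on Ioi 0
  have hprodcont : Continuous (fun t => |2 * φ t * φ' t|) :=
    ((continuous_const.mul φcont).mul φ'cont).abs
  have hprodcs : HasCompactSupport (fun t => |2 * φ t * φ' t|) := by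
    have h : (fun t => |2 * φ t * φ' t|) = (fun x : ℝ => |x|) ∘ (((2:ℝ) • φ) * φ') := by
      funext t; simp [mul_assoc]
    rw [h]
    exact (φ'hcs.mul_left).comp_left abs_zero
  have hprodint : IntegrableOn (fun t => |2 * φ t * φ' t|) (Set.Ioi (0:ℝ)) volume :=
    (hprodcont.integrable_of_hasCompactSupport (μ := volume) hprodcs).integrableOn
  have h2 : φ b ^ 2 ≤ ∫ t in Set.Ioi (0:ℝ), |2 * φ t * φ' t| := by
    calc φ b ^ 2 = -(∫ t in Set.Ioi b, 2 * φ t * φ' t) := by rw [h1]; ring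
      _ ≤ ‖∫ t in Set.Ioi b, 2 * φ t * φ' t‖ := by
          rw [Real.norm_eq_abs]; exact neg_le_abs _
      _ ≤ ∫ t in Set.Ioi b, ‖2 * φ t * φ' t‖ := norm_integral_le_integral_norm _
      _ = ∫ t in Set.Ioi b, |2 * φ t * φ' t| := by
          refine integral_congr_ae (Filter.Eventually.of_forall fun t => ?_)
          show ‖2 * φ t * φ' t‖ = |2 * φ t * φ' t|
          rw [Real.norm_eq_abs]
      _ ≤ ∫ t in Set.Ioi (0:ℝ), |2 * φ t * φ' t| := by
          refine setIntegral_mono_set hprodint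
            (Filter.Eventually.of_forall fun t => abs_nonneg _)
            (HasSubset.Subset.eventuallyLE (Set.Ioi_subset_Ioi hb.le))
  -- Cauchy-Schwarz
  have hpq : Real.HolderConjugate 2 2 := Real.holderConjugate_iff.2 ⟨one_lt_two, by norm_num⟩
  have mφ : MemLp φ (ENNReal.ofReal 2) (volume.restrict (Set.Ioi (0:ℝ))) :=
    (φcont.memLp_of_hasCompactSupport (μ := volume) φhcs).restrict _
  have mφ' : MemLp φ' (ENNReal.ofReal 2) (volume.restrict (Set.Ioi (0:ℝ))) :=
    (φ'cont.memLp_of_hasCompactSupport (μ := volume) φ'hcs).restrict _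
  have cs := integral_mul_norm_le_Lp_mul_Lq hpq mφ mφ'
  have hnorm2 : ∀ g : ℝ → ℝ, (∫ t in Set.Ioi (0:ℝ), ‖g t‖ ^ (2:ℝ))
      = ∫ t in Set.Ioi (0:ℝ), g t ^ 2 := by
    intro g
    refine integral_congr_ae (Filter.Eventually.of_forall fun t => ?_)
    show ‖g t‖ ^ (2:ℝ) = g t ^ 2
    rw [Real.norm_eq_abs, Real.rpow_two, sq_abs]
  rw [hnorm2 φ, hnorm2 φ'] at cs
  have h3 : ∫ t in Set.Ioi (0:ℝ), |2 * φ t * φ' t|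
      = 2 * ∫ t in Set.Ioi (0:ℝ), ‖φ t‖ * ‖φ' t‖ := by
    rw [← integral_const_mul]
    refine integral_congr_ae (Filter.Eventually.of_forall fun t => ?_)
    show |2 * φ t * φ' t| = 2 * (‖φ t‖ * ‖φ' t‖)
    rw [Real.norm_eq_abs, Real.norm_eq_abs, abs_mul, abs_mul, abs_two]
    ring
  calc φ b ^ 2 ≤ ∫ t in Set.Ioi (0:ℝ), |2 * φ t * φ' t| := h2
    _ = 2 * ∫ t in Set.Ioi (0:ℝ), ‖φ t‖ * ‖φ' t‖ := h3
    _ ≤ 2 * ((∫ t in Set.Ioi (0:ℝ), φ t ^ 2) ^ ((1:ℝ)/2)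
        * (∫ t in Set.Ioi (0:ℝ), φ' t ^ 2) ^ ((1:ℝ)/2)) := by
        exact mul_le_mul_of_nonneg_left cs (by norm_num)

noncomputable def gsqF (F : (Fin 3 → ℝ) → ℝ) : (Fin 2 → ℝ) → ℝ :=
  fun xh => ∫ t in Set.Ioi (0:ℝ), F (Fin.snoc xh t) ^ 2

noncomputable def MF (f : (Fin 3 → ℝ) → ℝ) (xh : Fin 2 → ℝ) : ℝ :=
  ⨆ x3 : {t : ℝ // 0 < t}, |f (Fin.snoc xh (x3 : ℝ))|

lemma gsqF_meas {F : (Fin 3 → ℝ) → ℝ} (hc : Continuous F) : StronglyMeasurable (gsqF F) := by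
  have hGsm : StronglyMeasurable (fun p : (Fin 2 → ℝ) × ℝ => F (Fin.snoc p.1 p.2) ^ 2) :=
    ((hc.comp (snoc_cont.comp continuous_swap)).pow 2).stronglyMeasurable
  exact hGsm.integral_prod_right' (ν := volume.restrict (Set.Ioi (0:ℝ)))

lemma memLp_of_bound {g : (Fin 2 → ℝ) → ℝ} (hm : AEStronglyMeasurable g volume)
    {R D : ℝ} (hD : 0 ≤ D) (hbd : ∀ x, |g x| ≤ D)
    (hvan : ∀ x : Fin 2 → ℝ, R < ‖x‖ → g x = 0) (p : ℝ≥0∞) :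
    MemLp g p volume := by
  refine MemLp.of_le
    (memLp_indicator_const p (measurableSet_closedBall (x := (0 : Fin 2 → ℝ)) (ε := R)) D
      (Or.inr (measure_closedBall_lt_top).ne)) hm
    (Filter.Eventually.of_forall fun x => ?_)
  by_cases hx : x ∈ Metric.closedBall (0 : Fin 2 → ℝ) R
  · rw [Set.indicator_of_mem hx, Real.norm_eq_abs, Real.norm_eq_abs, abs_of_nonneg hD]
    exact hbd x
  · rw [Set.indicator_of_notMem hx,
      hvan x (not_le.1 fun h => hx (mem_closedBall_zero_iff.2 h))]

lemma integrable_of_bound {g : (Fin 2 → ℝ) → ℝ} (hm : AEStronglyMeasurable g volume)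
    {R D : ℝ} (hD : 0 ≤ D) (hbd : ∀ x, |g x| ≤ D)
    (hvan : ∀ x : Fin 2 → ℝ, R < ‖x‖ → g x = 0) :
    Integrable g volume :=
  memLp_one_iff_integrable.1 (memLp_of_bound hm hD hbd hvan 1)

/-- The `L^{2/s}(ℝ²)` norm of `x_h ↦ sup_{x₃>0}|f(x_h,x₃)|` is bounded by
`‖∂₃f‖^{1/2}` times the square root of the `L^{2/(2s−1)}(ℝ²)` norm of
`x_h ↦ ‖f(x_h,·)‖_{L²(0,∞)}`. -/
theorem stmt19 :
    ∀ s : ℝ, 1/2 < s → s < 1 →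
    ∃ C > (0 : ℝ), ∀ f : (Fin 3 → ℝ) → ℝ,
      ContDiff ℝ (⊤ : ℕ∞) f → HasCompactSupport f →
      (∫ xh : Fin 2 → ℝ,
          (⨆ x3 : {t : ℝ // 0 < t}, |f (Fin.snoc xh (x3 : ℝ))|) ^ (2/s)) ^ (s/2) ≤
        C * L2H (pd 2 f) ^ ((1 : ℝ)/2) *
          (∫ xh : Fin 2 → ℝ,
              (∫ x3 in Set.Ioi (0 : ℝ), f (Fin.snoc xh x3) ^ 2) ^ (1/(2*s - 1))) ^
            ((2*s - 1)/4) := by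
  intro s hs1 hs2
  refine ⟨(2:ℝ) ^ ((1:ℝ)/2), Real.rpow_pos_of_pos two_pos _, ?_⟩
  intro f hf hsupp
  haveI : Nonempty {t : ℝ // 0 < t} := ⟨⟨1, one_pos⟩⟩
  have hspos : 0 < s := by linarith
  have hsne : s ≠ 0 := ne_of_gt hspos
  have h2s : 0 < 2*s - 1 := by linarith
  have h2sne : 2*s - 1 ≠ 0 := ne_of_gt h2s
  -- properties of pd 2 f
  have hPc : Continuous (pd 2 f) :=
    (hf.continuous_fderiv (by simp)).clm_apply continuous_const
  have hPs : HasCompactSupport (pd 2 f) := hsupp.fderiv_apply ℝ _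
  -- common radius and bound
  obtain ⟨R1, hR1, hvf1⟩ := exists_R hsupp
  obtain ⟨R2, hR2, hvP2⟩ := exists_R hPs
  have hRpos : (0:ℝ) < max R1 R2 := lt_of_lt_of_le hR1 (le_max_left _ _)
  set R := max R1 R2 with hRdef
  have hvf : ∀ x : Fin 3 → ℝ, R < ‖x‖ → f x = 0 := fun x hx =>
    hvf1 x (lt_of_le_of_lt (le_max_left _ _) hx)
  have hvP : ∀ x : Fin 3 → ℝ, R < ‖x‖ → pd 2 f x = 0 := fun x hx =>
    hvP2 x (lt_of_le_of_lt (le_max_right _ _) hx)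
  obtain ⟨C1, hC1⟩ := hf.continuous.bounded_above_of_compact_support hsupp
  obtain ⟨C2, hC2⟩ := hPc.bounded_above_of_compact_support hPs
  set Cb := max C1 C2 with hCbdef
  have hCf : ∀ x, |f x| ≤ Cb := fun x =>
    le_trans (by rw [← Real.norm_eq_abs]; exact hC1 x) (le_max_left _ _)
  have hCP : ∀ x, |pd 2 f x| ≤ Cb := fun x =>
    le_trans (by rw [← Real.norm_eq_abs]; exact hC2 x) (le_max_right _ _)
  set D := 2 * R * Cb ^ 2 with hDdef
  have hCb0 : 0 ≤ Cb := (abs_nonneg _).trans (hCf 0)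
  have hD0 : 0 ≤ D := by positivity
  -- slice squares
  have hg0 : ∀ xh, 0 ≤ gsqF f xh := fun xh => slice_int_nonneg f xh
  have hh0 : ∀ xh, 0 ≤ gsqF (pd 2 f) xh := fun xh => slice_int_nonneg _ xh
  have hgD : ∀ xh, gsqF f xh ≤ D := fun xh => slice_int_le hRpos hvf hCf xh
  have hhD : ∀ xh, gsqF (pd 2 f) xh ≤ D := fun xh => slice_int_le hRpos hvP hCP xh
  have hgz : ∀ xh : Fin 2 → ℝ, R < ‖xh‖ → gsqF f xh = 0 := fun xh h => slice_int_zero hvf xh h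
  have hhz : ∀ xh : Fin 2 → ℝ, R < ‖xh‖ → gsqF (pd 2 f) xh = 0 := fun xh h =>
    slice_int_zero hvP xh h
  have hgm : StronglyMeasurable (gsqF f) := gsqF_meas hf.continuous
  have hhm : StronglyMeasurable (gsqF (pd 2 f)) := gsqF_meas hPc
  -- pointwise bound on the sup
  have hM0 : ∀ xh, 0 ≤ MF f xh := by
    intro xh
    have hb : BddAbove (Set.range fun x3 : {t : ℝ // 0 < t} => |f (Fin.snoc xh (x3:ℝ))|) :=
      ⟨Cb, by rintro y ⟨x3, rfl⟩; exact hCf _⟩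
    exact (abs_nonneg _).trans (le_ciSup hb ⟨1, one_pos⟩)
  have hMle : ∀ xh, MF f xh ^ (2/s)
      ≤ 2 ^ ((1:ℝ)/s) * (gsqF (pd 2 f) xh ^ (1/(2*s)) * gsqF f xh ^ (1/(2*s))) := by
    intro xh
    set K := 2 * ((gsqF f xh) ^ ((1:ℝ)/2) * (gsqF (pd 2 f) xh) ^ ((1:ℝ)/2)) with hKdef
    have hK0 : 0 ≤ K := by
      have := Real.rpow_nonneg (hg0 xh) ((1:ℝ)/2)
      have := Real.rpow_nonneg (hh0 xh) ((1:ℝ)/2)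
      positivity
    have hsq : ∀ b : {t : ℝ // 0 < t}, f (Fin.snoc xh (b:ℝ)) ^ 2 ≤ K := fun b =>
      pointwise_sq_le hf hvf hvP hPc xh b.2
    have hMsqrt : MF f xh ≤ Real.sqrt K := by
      refine ciSup_le fun b => ?_
      rw [← Real.sqrt_sq_eq_abs]
      exact Real.sqrt_le_sqrt (hsq b)
    have hMsq : MF f xh ^ 2 ≤ K := by
      calc MF f xh ^ 2 ≤ Real.sqrt K ^ 2 := by
            exact pow_le_pow_left₀ (hM0 xh) hMsqrt 2
        _ = K := Real.sq_sqrt hK0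
    have e1 : MF f xh ^ (2/s) = (MF f xh ^ 2) ^ ((1:ℝ)/s) := by
      rw [← Real.rpow_two, ← Real.rpow_mul (hM0 xh), div_eq_mul_inv, one_div]
    rw [e1]
    have e2 : (MF f xh ^ 2) ^ ((1:ℝ)/s) ≤ K ^ ((1:ℝ)/s) :=
      Real.rpow_le_rpow (sq_nonneg _) hMsq (by positivity)
    refine e2.trans (le_of_eq ?_)
    rw [hKdef, Real.mul_rpow (by norm_num)
        (mul_nonneg (Real.rpow_nonneg (hg0 xh) _) (Real.rpow_nonneg (hh0 xh) _)),
      Real.mul_rpow (Real.rpow_nonneg (hg0 xh) _) (Real.rpow_nonneg (hh0 xh) _),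
      ← Real.rpow_mul (hg0 xh), ← Real.rpow_mul (hh0 xh)]
    rw [show (1:ℝ)/2 * (1/s) = 1/(2*s) by field_simp]
    ring
  -- notation-level reduction of the goal
  show (∫ xh : Fin 2 → ℝ, MF f xh ^ (2/s)) ^ (s/2)
      ≤ 2 ^ ((1:ℝ)/2) * L2H (pd 2 f) ^ ((1:ℝ)/2)
        * (∫ xh : Fin 2 → ℝ, gsqF f xh ^ (1/(2*s - 1))) ^ ((2*s - 1)/4)
  -- measurability of the rpow'd functions
  have hgm' : AEStronglyMeasurable (fun xh => gsqF f xh ^ ((1:ℝ)/(2*s))) volume :=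
    ((Real.continuous_rpow_const (by positivity)).comp_stronglyMeasurable hgm).aestronglyMeasurable
  have hhm' : AEStronglyMeasurable (fun xh => gsqF (pd 2 f) xh ^ ((1:ℝ)/(2*s))) volume :=
    ((Real.continuous_rpow_const (by positivity)).comp_stronglyMeasurable hhm).aestronglyMeasurable
  -- MemLp facts
  have mem1 : MemLp (fun xh => gsqF (pd 2 f) xh ^ ((1:ℝ)/(2*s))) (ENNReal.ofReal (2*s)) volume := by
    refine memLp_of_bound hhm' (R := R) (D := D ^ ((1:ℝ)/(2*s))) (Real.rpow_nonneg hD0 _)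
      (fun x => ?_) (fun x hx => ?_) _
    · rw [abs_of_nonneg (Real.rpow_nonneg (hh0 x) _)]
      exact Real.rpow_le_rpow (hh0 x) (hhD x) (by positivity)
    · rw [hhz x hx, Real.zero_rpow (ne_of_gt (by positivity))]
  have mem2 : MemLp (fun xh => gsqF f xh ^ ((1:ℝ)/(2*s)))
      (ENNReal.ofReal (2*s/(2*s-1))) volume := by
    refine memLp_of_bound hgm' (R := R) (D := D ^ ((1:ℝ)/(2*s))) (Real.rpow_nonneg hD0 _)
      (fun x => ?_) (fun x hx => ?_) _
    · rw [abs_of_nonneg (Real.rpow_nonneg (hg0 x) _)]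
      exact Real.rpow_le_rpow (hg0 x) (hgD x) (by positivity)
    · rw [hgz x hx, Real.zero_rpow (ne_of_gt (by positivity))]
  -- Hölder on ℝ²
  have hpq : Real.HolderConjugate (2*s) (2*s/(2*s-1)) := by
    refine Real.holderConjugate_iff.2 ⟨?_, ?_⟩
    · linarith
    · rw [inv_div]
      field_simp
      ring
  have holder := integral_mul_le_Lp_mul_Lq_of_nonneg hpq
    (Filter.Eventually.of_forall fun xh => Real.rpow_nonneg (hh0 xh) _)
    (Filter.Eventually.of_forall fun xh => Real.rpow_nonneg (hg0 xh) _) mem1 mem2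
  have eh : ∀ xh : Fin 2 → ℝ, (gsqF (pd 2 f) xh ^ ((1:ℝ)/(2*s))) ^ (2*s)
      = gsqF (pd 2 f) xh := by
    intro xh
    rw [← Real.rpow_mul (hh0 xh), show (1:ℝ)/(2*s) * (2*s) = 1 by field_simp, Real.rpow_one]
  have eg : ∀ xh : Fin 2 → ℝ, (gsqF f xh ^ ((1:ℝ)/(2*s))) ^ (2*s/(2*s-1))
      = gsqF f xh ^ ((1:ℝ)/(2*s-1)) := by
    intro xh
    rw [← Real.rpow_mul (hg0 xh)]
    congr 1
    field_simp
  have holder2 : ∫ xh : Fin 2 → ℝ, gsqF (pd 2 f) xh ^ ((1:ℝ)/(2*s)) * gsqF f xh ^ ((1:ℝ)/(2*s))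
      ≤ (∫ xh : Fin 2 → ℝ, gsqF (pd 2 f) xh) ^ ((1:ℝ)/(2*s))
        * (∫ xh : Fin 2 → ℝ, gsqF f xh ^ ((1:ℝ)/(2*s-1))) ^ ((2*s-1)/(2*s)) := by
    have h1 : ∫ xh : Fin 2 → ℝ, (gsqF (pd 2 f) xh ^ ((1:ℝ)/(2*s))) ^ (2*s)
        = ∫ xh : Fin 2 → ℝ, gsqF (pd 2 f) xh :=
      integral_congr_ae (Filter.Eventually.of_forall eh)
    have h2 : ∫ xh : Fin 2 → ℝ, (gsqF f xh ^ ((1:ℝ)/(2*s))) ^ (2*s/(2*s-1))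
        = ∫ xh : Fin 2 → ℝ, gsqF f xh ^ ((1:ℝ)/(2*s-1)) :=
      integral_congr_ae (Filter.Eventually.of_forall eg)
    have h3 : 1/(2*s/(2*s-1)) = (2*s-1)/(2*s) := one_div_div _ _
    calc ∫ xh : Fin 2 → ℝ, gsqF (pd 2 f) xh ^ ((1:ℝ)/(2*s)) * gsqF f xh ^ ((1:ℝ)/(2*s))
        ≤ (∫ xh : Fin 2 → ℝ, (gsqF (pd 2 f) xh ^ ((1:ℝ)/(2*s))) ^ (2*s)) ^ (1/(2*s))
          * (∫ xh : Fin 2 → ℝ, (gsqF f xh ^ ((1:ℝ)/(2*s))) ^ (2*s/(2*s-1))) ^ (1/(2*s/(2*s-1))) :=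
          holder
      _ = _ := by rw [h1, h2, h3]
  -- integrability of the dominating function
  have hintRHS : Integrable (fun xh : Fin 2 → ℝ =>
      2 ^ ((1:ℝ)/s) * (gsqF (pd 2 f) xh ^ ((1:ℝ)/(2*s)) * gsqF f xh ^ ((1:ℝ)/(2*s)))) volume := by
    refine integrable_of_bound
      (aestronglyMeasurable_const.mul (hhm'.mul hgm'))
      (R := R) (D := 2 ^ ((1:ℝ)/s) * (D ^ ((1:ℝ)/(2*s)) * D ^ ((1:ℝ)/(2*s))))
      (by have := Real.rpow_nonneg hD0 ((1:ℝ)/(2*s)); positivity)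
      (fun x => ?_) (fun x hx => ?_)
    · rw [abs_of_nonneg (by
        have h1 := Real.rpow_nonneg (hh0 x) ((1:ℝ)/(2*s))
        have h2 := Real.rpow_nonneg (hg0 x) ((1:ℝ)/(2*s))
        positivity)]
      refine mul_le_mul_of_nonneg_left ?_ (Real.rpow_nonneg (by norm_num) _)
      refine mul_le_mul (Real.rpow_le_rpow (hh0 x) (hhD x) (by positivity))
        (Real.rpow_le_rpow (hg0 x) (hgD x) (by positivity))
        (Real.rpow_nonneg (hg0 x) _) (Real.rpow_nonneg hD0 _)
    · rw [hhz x hx, Real.zero_rpow (ne_of_gt (by positivity)), zero_mul, mul_zero]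
  -- comparison of integrals
  have mono1 : (∫ xh : Fin 2 → ℝ, MF f xh ^ (2/s))
      ≤ ∫ xh : Fin 2 → ℝ,
          2 ^ ((1:ℝ)/s) * (gsqF (pd 2 f) xh ^ ((1:ℝ)/(2*s)) * gsqF f xh ^ ((1:ℝ)/(2*s))) :=
    integral_mono_of_nonneg
      (Filter.Eventually.of_forall fun xh => Real.rpow_nonneg (hM0 xh) _)
      hintRHS (Filter.Eventually.of_forall hMle)
  have Xle : (∫ xh : Fin 2 → ℝ, MF f xh ^ (2/s))
      ≤ 2 ^ ((1:ℝ)/s) * ((∫ xh : Fin 2 → ℝ, gsqF (pd 2 f) xh) ^ ((1:ℝ)/(2*s))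
        * (∫ xh : Fin 2 → ℝ, gsqF f xh ^ ((1:ℝ)/(2*s-1))) ^ ((2*s-1)/(2*s))) := by
    calc (∫ xh : Fin 2 → ℝ, MF f xh ^ (2/s))
        ≤ ∫ xh : Fin 2 → ℝ,
            2 ^ ((1:ℝ)/s) * (gsqF (pd 2 f) xh ^ ((1:ℝ)/(2*s)) * gsqF f xh ^ ((1:ℝ)/(2*s))) :=
          mono1
      _ = 2 ^ ((1:ℝ)/s) * ∫ xh : Fin 2 → ℝ,
            gsqF (pd 2 f) xh ^ ((1:ℝ)/(2*s)) * gsqF f xh ^ ((1:ℝ)/(2*s)) :=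
          integral_const_mul _ _
      _ ≤ _ := mul_le_mul_of_nonneg_left holder2 (Real.rpow_nonneg (by norm_num) _)
  -- Fubini identification with L2H
  have hfub : ∫ x in {x : Fin 3 → ℝ | 0 < x 2}, pd 2 f x ^ 2
      = ∫ xh : Fin 2 → ℝ, gsqF (pd 2 f) xh := by
    have hcs : HasCompactSupport (fun x : Fin 3 → ℝ => pd 2 f x ^ 2) := by
      have h : (fun x : Fin 3 → ℝ => pd 2 f x ^ 2) = pd 2 f * pd 2 f :=
        funext fun x => pow_two _
      rw [h]; exact hPs.mul_left
    exact fubini_half _ (hPc.pow 2) hcs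
  have A0 : 0 ≤ ∫ xh : Fin 2 → ℝ, gsqF (pd 2 f) xh := integral_nonneg hh0
  have B0 : 0 ≤ ∫ xh : Fin 2 → ℝ, gsqF f xh ^ ((1:ℝ)/(2*s-1)) :=
    integral_nonneg fun xh => Real.rpow_nonneg (hg0 xh) _
  have X0 : 0 ≤ ∫ xh : Fin 2 → ℝ, MF f xh ^ (2/s) :=
    integral_nonneg fun xh => Real.rpow_nonneg (hM0 xh) _
  have mP : MemLp (pd 2 f) 2 (volume.restrict {x : Fin 3 → ℝ | 0 < x 2}) :=
    (hPc.memLp_of_hasCompactSupport (μ := volume) hPs).restrict _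
  have hL2 : L2H (pd 2 f) = (∫ xh : Fin 2 → ℝ, gsqF (pd 2 f) xh) ^ ((2:ℝ)⁻¹) := by
    have h1 : ∫ x in {x : Fin 3 → ℝ | 0 < x 2}, ‖pd 2 f x‖ ^ ((2:ℝ≥0∞)).toReal
        = ∫ x in {x : Fin 3 → ℝ | 0 < x 2}, pd 2 f x ^ 2 := by
      refine integral_congr_ae (Filter.Eventually.of_forall fun x => ?_)
      show ‖pd 2 f x‖ ^ ((2:ℝ≥0∞)).toReal = pd 2 f x ^ 2
      rw [ENNReal.toReal_ofNat, Real.norm_eq_abs, Real.rpow_two, sq_abs]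
    rw [L2H, mP.eLpNorm_eq_integral_rpow_norm two_ne_zero ENNReal.ofNat_ne_top,
      ENNReal.toReal_ofReal (Real.rpow_nonneg
        (integral_nonneg fun x => Real.rpow_nonneg (norm_nonneg _) _) _),
      h1, hfub, ENNReal.toReal_ofNat]
  -- final exponent algebra
  have hA4 : ((∫ xh : Fin 2 → ℝ, gsqF (pd 2 f) xh) ^ ((1:ℝ)/(2*s))) ^ (s/2)
      = (∫ xh : Fin 2 → ℝ, gsqF (pd 2 f) xh) ^ ((1:ℝ)/4) := by
    rw [← Real.rpow_mul A0]
    congr 1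
    field_simp
    ring
  have hB4 : ((∫ xh : Fin 2 → ℝ, gsqF f xh ^ ((1:ℝ)/(2*s-1))) ^ ((2*s-1)/(2*s))) ^ (s/2)
      = (∫ xh : Fin 2 → ℝ, gsqF f xh ^ ((1:ℝ)/(2*s-1))) ^ ((2*s-1)/4) := by
    rw [← Real.rpow_mul B0]
    congr 1
    field_simp
    ring
  have h24 : (((2:ℝ) ^ ((1:ℝ)/s)) ^ (s/2) : ℝ) = 2 ^ ((1:ℝ)/2) := by
    rw [← Real.rpow_mul (by norm_num : (0:ℝ) ≤ 2)]
    congr 1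
    field_simp
  have hL4 : L2H (pd 2 f) ^ ((1:ℝ)/2)
      = (∫ xh : Fin 2 → ℝ, gsqF (pd 2 f) xh) ^ ((1:ℝ)/4) := by
    rw [hL2, ← Real.rpow_mul A0]
    norm_num
  calc (∫ xh : Fin 2 → ℝ, MF f xh ^ (2/s)) ^ (s/2)
      ≤ (2 ^ ((1:ℝ)/s) * ((∫ xh : Fin 2 → ℝ, gsqF (pd 2 f) xh) ^ ((1:ℝ)/(2*s))
        * (∫ xh : Fin 2 → ℝ, gsqF f xh ^ ((1:ℝ)/(2*s-1))) ^ ((2*s-1)/(2*s)))) ^ (s/2) :=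
        Real.rpow_le_rpow X0 Xle (by positivity)
    _ = 2 ^ ((1:ℝ)/2) * L2H (pd 2 f) ^ ((1:ℝ)/2)
        * (∫ xh : Fin 2 → ℝ, gsqF f xh ^ ((1:ℝ)/(2*s-1))) ^ ((2*s-1)/4) := by
        rw [Real.mul_rpow (Real.rpow_nonneg (by norm_num) _)
            (mul_nonneg (Real.rpow_nonneg A0 _) (Real.rpow_nonneg B0 _)),
          Real.mul_rpow (Real.rpow_nonneg A0 _) (Real.rpow_nonneg B0 _),
          h24, hA4, hB4, hL4]
        ring
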